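/- Let G be the presented group on generators α, α′, β, β′, γ, γ′ with the relations R₄ together with the additional relations α = α′ = β = β′. Then G is abelian. -/

import Mathlib

/-- The relations of the reduced braid group `B̄₃`:
`σ₁σ₂σ₁ = σ₂σ₁σ₂` and `(σ₁σ₂)³ = 1`. -/
def bbar3Rels : Set (FreeGroup (Fin 2)) :=
  { FreeGroup.of 0 * FreeGroup.of 1 * FreeGroup.of 0 *
      (FreeGroup.of 1 * FreeGroup.of 0 * FreeGroup.of 1)⁻¹,
    (FreeGroup.of 0 * FreeGroup.of 1) ^ 3 }

/-- The reduced braid group `B̄₃ = ⟨σ₁, σ₂ ∣ σ₁σ₂σ₁ = σ₂σ₁σ₂, (σ₁σ₂)³ = 1⟩`. -/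
abbrev Bbar3 : Type := PresentedGroup bbar3Rels

/-- The generator `σ₁` of `B̄₃`. -/
def σ1 : Bbar3 := PresentedGroup.of 0

/-- The generator `σ₂` of `B̄₃`. -/
def σ2 : Bbar3 := PresentedGroup.of 1

namespace Stmt

def a : FreeGroup (Fin 6) := FreeGroup.of 0
def a' : FreeGroup (Fin 6) := FreeGroup.of 1
def b : FreeGroup (Fin 6) := FreeGroup.of 2
def b' : FreeGroup (Fin 6) := FreeGroup.of 3
def c : FreeGroup (Fin 6) := FreeGroup.of 4
def c' : FreeGroup (Fin 6) := FreeGroup.of 5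

/-- The set of relators. -/
def rels : Set (FreeGroup (Fin 6)) :=
  { (a * b) ^ 3 * (b' * a' * b' * a * b * a)⁻¹,
    (a' * b') ^ 3 * (b * a * b * a' * b' * a')⁻¹,
    a * b * (a' * b')⁻¹,
    ((b * a * b)⁻¹ * a * (b * a * b)) * (c') * ((b * a * b)⁻¹ * a * (b * a * b))⁻¹ * (c')⁻¹,
    ((b' * a' * b')⁻¹ * a' * (b' * a' * b')) * (c) * ((b' * a' * b')⁻¹ * a' * (b' * a' * b'))⁻¹ * (c)⁻¹,
    c * c' * c * (c' * c * c')⁻¹,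
    b * (c' * c * c'⁻¹)⁻¹,
    b' * (c * c' * c⁻¹)⁻¹,
    (b' * c)⁻¹ * a' * b' * c * ((b * c')⁻¹ * a * b * c')⁻¹,
    a * b * c' * a' * b' * c,
    a * a'⁻¹,
    a' * b⁻¹,
    b * b'⁻¹ }

end Stmt

private def π8 : FreeGroup (Fin 6) →* PresentedGroup Stmt.rels := QuotientGroup.mk' _

private lemma relh8 {r : FreeGroup (Fin 6)} (h : r ∈ Stmt.rels) : π8 r = 1 :=
  (QuotientGroup.eq_one_iff r).mpr (Subgroup.subset_normalClosure h)

private lemma gen_comm8 : ∀ i j : Fin 6,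
    Commute (π8 (FreeGroup.of i)) (π8 (FreeGroup.of j)) := by
  have h11 := relh8 (r := Stmt.a * Stmt.a'⁻¹)
    (Set.mem_insert_of_mem _ (Set.mem_insert_of_mem _ (Set.mem_insert_of_mem _ (Set.mem_insert_of_mem _ (Set.mem_insert_of_mem _ (Set.mem_insert_of_mem _ (Set.mem_insert_of_mem _ (Set.mem_insert_of_mem _ (Set.mem_insert_of_mem _ (Set.mem_insert_of_mem _ (Set.mem_insert _ _)))))))))))
  have h12 := relh8 (r := Stmt.a' * Stmt.b⁻¹)
    (Set.mem_insert_of_mem _ (Set.mem_insert_of_mem _ (Set.mem_insert_of_mem _ (Set.mem_insert_of_mem _ (Set.mem_insert_of_mem _ (Set.mem_insert_of_mem _ (Set.mem_insert_of_mem _ (Set.mem_insert_of_mem _ (Set.mem_insert_of_mem _ (Set.mem_insert_of_mem _ (Set.mem_insert_of_mem _ (Set.mem_insert _ _))))))))))))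
  have h13 := relh8 (r := Stmt.b * Stmt.b'⁻¹)
    (Set.mem_insert_of_mem _ (Set.mem_insert_of_mem _ (Set.mem_insert_of_mem _ (Set.mem_insert_of_mem _ (Set.mem_insert_of_mem _ (Set.mem_insert_of_mem _ (Set.mem_insert_of_mem _ (Set.mem_insert_of_mem _ (Set.mem_insert_of_mem _ (Set.mem_insert_of_mem _ (Set.mem_insert_of_mem _ (Set.mem_insert_of_mem _ (Set.mem_singleton _)))))))))))))
  have h4 := relh8 (r := ((Stmt.b * Stmt.a * Stmt.b)⁻¹ * Stmt.a * (Stmt.b * Stmt.a * Stmt.b)) * Stmt.c' * ((Stmt.b * Stmt.a * Stmt.b)⁻¹ * Stmt.a * (Stmt.b * Stmt.a * Stmt.b))⁻¹ * Stmt.c'⁻¹)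
    (Set.mem_insert_of_mem _ (Set.mem_insert_of_mem _ (Set.mem_insert_of_mem _ (Set.mem_insert _ _))))
  have h5 := relh8 (r := ((Stmt.b' * Stmt.a' * Stmt.b')⁻¹ * Stmt.a' * (Stmt.b' * Stmt.a' * Stmt.b')) * Stmt.c * ((Stmt.b' * Stmt.a' * Stmt.b')⁻¹ * Stmt.a' * (Stmt.b' * Stmt.a' * Stmt.b'))⁻¹ * Stmt.c⁻¹)
    (Set.mem_insert_of_mem _ (Set.mem_insert_of_mem _ (Set.mem_insert_of_mem _ (Set.mem_insert_of_mem _ (Set.mem_insert _ _)))))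
  have h10 := relh8 (r := Stmt.a * Stmt.b * Stmt.c' * Stmt.a' * Stmt.b' * Stmt.c)
    (Set.mem_insert_of_mem _ (Set.mem_insert_of_mem _ (Set.mem_insert_of_mem _ (Set.mem_insert_of_mem _ (Set.mem_insert_of_mem _ (Set.mem_insert_of_mem _ (Set.mem_insert_of_mem _ (Set.mem_insert_of_mem _ (Set.mem_insert_of_mem _ (Set.mem_insert _ _))))))))))
  simp only [map_mul, map_inv, mul_inv_eq_one] at h11 h12 h13
  simp only [map_mul, map_inv, ← h11, ← h12, ← h13] at h4 h5 h10
  set x := π8 Stmt.a with hx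
  set u := π8 Stmt.c with hu
  set v := π8 Stmt.c' with hv
  have hxv : x * v = v * x := by
    have h := h4
    rw [mul_inv_eq_one, mul_inv_eq_iff_eq_mul] at h
    group at h ⊢
    exact h
  have hxu : x * u = u * x := by
    have h := h5
    rw [mul_inv_eq_one, mul_inv_eq_iff_eq_mul] at h
    group at h ⊢
    exact h
  have Cxv : Commute x v := hxv
  have Cxu : Commute x u := hxu
  have hueq : u = (x * x * v * x * x)⁻¹ := eq_inv_of_mul_eq_one_right h10
  have C5 : Commute (x * x * v * x * x) v :=
    (((Cxv.mul_left Cxv).mul_left (Commute.refl v)).mul_left Cxv).mul_left Cxv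
  have Cuv : Commute u v := by rw [hueq]; exact C5.inv_left
  have img : ∀ i : Fin 6, π8 (FreeGroup.of i) = x ∨ π8 (FreeGroup.of i) = u ∨
      π8 (FreeGroup.of i) = v := by
    intro i
    fin_cases i
    · exact Or.inl rfl
    · exact Or.inl h11.symm
    · exact Or.inl (h12.symm.trans h11.symm)
    · exact Or.inl ((h13.symm.trans h12.symm).trans h11.symm)
    · exact Or.inr (Or.inl rfl)
    · exact Or.inr (Or.inr rfl)
  intro i j
  rcases img i with hi | hi | hi <;> rcases img j with hj | hj | hj <;> rw [hi, hj] <;>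
    first
      | exact Commute.refl _
      | exact Cxu | exact Cxu.symm
      | exact Cxv | exact Cxv.symm
      | exact Cuv | exact Cuv.symm

/-- Adding the relations `α = α' = β = β'` to the relations R₄, the resulting group
is abelian. -/
theorem stmt8 : ∀ x y : PresentedGroup Stmt.rels, x * y = y * x := by
  have step : ∀ z : FreeGroup (Fin 6), ∀ i : Fin 6,
      Commute (π8 z) (π8 (FreeGroup.of i)) := by
    intro z
    induction z using FreeGroup.induction_on with
    | C1 => intro i; simpa using Commute.one_left _
    | of j => intro i; exact gen_comm8 j i
    | inv_of j ih => intro i; simpa using (ih i).inv_left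
    | mul w₁ w₂ ih1 ih2 => intro i; simpa using (ih1 i).mul_left (ih2 i)
  have key : ∀ w z : FreeGroup (Fin 6), Commute (π8 w) (π8 z) := by
    intro w z
    induction z using FreeGroup.induction_on with
    | C1 => simpa using Commute.one_right _
    | of j => exact step w j
    | inv_of j ih => simpa using ih.inv_right
    | mul w₁ w₂ ih1 ih2 => simpa using ih1.mul_right ih2
  intro x y
  obtain ⟨w, rfl⟩ := QuotientGroup.mk'_surjective _ x
  obtain ⟨z, rfl⟩ := QuotientGroup.mk'_surjective _ y
  exact key w z
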